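/- Let U be an n-qubit unitary, k < n, and τ > 0. If S ⊆ [n] satisfies S ⊇ {i ∈ [n] : Inf_i^{≤k}[U] ≥ τ²/k}, then dist(U, J_{S,k}) ≤ dist(U, J_k) + √τ, where J_{S,k} is the class of k-junta unitaries supported inside S and J_k the class of all k-junta unitaries. -/

import Mathlib

open scoped Matrix

open Finset

/-- The four single-qubit Pauli matrices `I, X, Y, Z`. -/
noncomputable def pauli (x : Fin 4) : Matrix (Fin 2) (Fin 2) ℂ :=
  if x = 0 then 1
  else if x = 1 then !![0, 1; 1, 0]
  else if x = 2 then !![0, -Complex.I; Complex.I, 0]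
  else !![1, 0; 0, -1]

/-- The `n`-qubit Pauli string `σ_x = σ_{x₁} ⊗ ⋯ ⊗ σ_{xₙ}`. -/
noncomputable def pauliString {n : ℕ} (x : Fin n → Fin 4) :
    Matrix (Fin n → Fin 2) (Fin n → Fin 2) ℂ :=
  Matrix.of fun a b => ∏ i, pauli (x i) (a i) (b i)

/-- The Pauli (Fourier) coefficient `Û(x) = 2⁻ⁿ Tr(σ_x† U)`. -/
noncomputable def pauliCoeff {n : ℕ} (U : Matrix (Fin n → Fin 2) (Fin n → Fin 2) ℂ)
    (x : Fin n → Fin 4) : ℂ :=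
  (1 / 2 ^ n) * Matrix.trace ((pauliString x)ᴴ * U)

/-- The support of a Pauli string. -/
def psupp {n : ℕ} (x : Fin n → Fin 4) : Finset (Fin n) :=
  Finset.univ.filter fun i => x i ≠ 0

/-- Influence of a set of qubits: `Inf_A[U] = ∑_{supp(x) ∩ A ≠ ∅} |Û(x)|²`. -/
noncomputable def infSet {n : ℕ} (U : Matrix (Fin n → Fin 2) (Fin n → Fin 2) ℂ)
    (A : Finset (Fin n)) : ℝ :=
  ∑ x ∈ Finset.univ.filter (fun x : Fin n → Fin 4 => (psupp x ∩ A).Nonempty),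
    ‖pauliCoeff U x‖ ^ 2

/-- Degree-`k` influence of qubit `i`:
`Inf_i^{≤k}[U] = ∑_{|supp(x)| ≤ k, x_i ≠ 0} |Û(x)|²`. -/
noncomputable def infLe {n : ℕ} (U : Matrix (Fin n → Fin 2) (Fin n → Fin 2) ℂ)
    (k : ℕ) (i : Fin n) : ℝ :=
  ∑ x ∈ Finset.univ.filter (fun x : Fin n → Fin 4 => (psupp x).card ≤ k ∧ x i ≠ 0),
    ‖pauliCoeff U x‖ ^ 2

/-- A matrix is a junta on the qubit set T if all its Pauli coefficients
outside T vanish, i.e. it acts nontrivially only on T. -/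
def IsJuntaOn {n : ℕ} (V : Matrix (Fin n → Fin 2) (Fin n → Fin 2) ℂ)
    (T : Finset (Fin n)) : Prop :=
  ∀ x : Fin n → Fin 4, ¬ psupp x ⊆ T → pauliCoeff V x = 0

/-- The distance from U to the class of k-junta unitaries supported inside S,
using the phase-minimized normalized Frobenius distance
dist(U,V) = sqrt(1 - |Tr(U† V)|/2^n). -/
noncomputable def distToKJuntaIn {n : ℕ} (U : Matrix (Fin n → Fin 2) (Fin n → Fin 2) ℂ)
    (S : Finset (Fin n)) (k : ℕ) : ℝ :=
  sInf {r : ℝ | ∃ V ∈ Matrix.unitaryGroup (Fin n → Fin 2) ℂ,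
    ∃ T : Finset (Fin n), T ⊆ S ∧ T.card ≤ k ∧ IsJuntaOn V T ∧
    r = Real.sqrt (1 - ‖Matrix.trace (Uᴴ * V)‖ / (2 ^ n : ℝ))}

/-!
Fix a `k`-junta unitary `V` acting on a set `T` of at most `k` qubits, and put `T' = T ∩ S`.
Every qubit of `T \ S` has degree-`k` influence below `τ²/k`, and there are at most `k` of them,
so the Pauli weight of `U` on strings supported in `T` but not in `T'` is at most `τ²`. By
Parseval and Cauchy–Schwarz, replacing `U` by its Pauli restriction `C` to `T'` therefore moves
`Tr(U†V)` by at most `2ⁿτ`.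

The `T'`-juntas are exactly the commutant of the Pauli strings acting trivially on `T'`, a
`*`-algebra. Hence the unitary factor `W = C |C|⁻¹` of the polar decomposition of `C` (after a
small perturbation making `C` invertible) is again a `T'`-junta, and `|Tr(C†W)| = Tr |C|`
dominates `|Tr(C†Z)|` for every unitary `Z`, in particular for `Z = V`. As `Tr(C†W) = Tr(U†W)`,
the distance from `U` to `W` exceeds the one to `V` by at most `√τ` plus an arbitrarily small
slack from the perturbation.
-/

open Matrix

lemma Real.sqrt_add_le_add_sqrt (x : ℝ) {y : ℝ} (hy : 0 ≤ y) : √(x + y) ≤ √x + √y := by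
  rcases le_or_gt 0 x with hx | hx
  · refine Real.sqrt_le_iff.mpr ⟨by positivity, ?_⟩
    nlinarith [Real.sq_sqrt hx, Real.sq_sqrt hy, Real.sqrt_nonneg x, Real.sqrt_nonneg y]
  · rw [Real.sqrt_eq_zero_of_nonpos hx.le, zero_add]
    exact Real.sqrt_le_sqrt (by linarith)

lemma sqrt_one_sub_div_le {a b N τ η : ℝ} (hN : 0 < N) (hτ : 0 ≤ τ) (hη : 0 ≤ η)
    (h : a ≤ b + N * τ + N * η ^ 2) : √(1 - b / N) ≤ √(1 - a / N) + √τ + η := by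
  have h' : 1 - b / N ≤ (1 - a / N) + (τ + η ^ 2) := by
    have : (a - b) / N ≤ τ + η ^ 2 := by rw [div_le_iff₀ hN]; linarith
    rw [sub_div] at this
    linarith
  calc √(1 - b / N) ≤ √((1 - a / N) + (τ + η ^ 2)) := Real.sqrt_le_sqrt h'
    _ ≤ √(1 - a / N) + (√τ + √(η ^ 2)) := by
      grw [Real.sqrt_add_le_add_sqrt _ (by positivity), Real.sqrt_add_le_add_sqrt _ (sq_nonneg _)]
    _ = √(1 - a / N) + √τ + η := by rw [Real.sqrt_sq hη, add_assoc]

lemma Real.sInf_le_sInf_add {A B : Set ℝ} (hA : BddBelow A) (hB : B.Nonempty) {c : ℝ}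
    (h : ∀ b ∈ B, ∀ η > 0, ∃ a ∈ A, a ≤ b + c + η) : sInf A ≤ sInf B + c := by
  suffices sInf A - c ≤ sInf B by linarith
  refine le_csInf hB fun b hb => le_of_forall_pos_le_add fun η hη => ?_
  obtain ⟨a, ha, hab⟩ := h b hb η hη
  linarith [csInf_le hA ha]

lemma norm_sum_star_mul_le {ι 𝕜 : Type*} [RCLike 𝕜] (s : Finset ι) (f g : ι → 𝕜) :
    ‖∑ i ∈ s, star (f i) * g i‖ ≤ √(∑ i ∈ s, ‖f i‖ ^ 2) * √(∑ i ∈ s, ‖g i‖ ^ 2) :=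
  (norm_sum_le _ _).trans <| by
    simpa using Real.sum_mul_le_sqrt_mul_sqrt s (fun i => ‖f i‖) (fun i => ‖g i‖)

lemma Finset.sum_biUnion_le_sum_sum {ι α M : Type*} [DecidableEq α] [AddCommMonoid M]
    [PartialOrder M] [IsOrderedAddMonoid M] {f : α → M} (hf : ∀ a, 0 ≤ f a) (s : Finset ι)
    (t : ι → Finset α) : ∑ a ∈ s.biUnion t, f a ≤ ∑ i ∈ s, ∑ a ∈ t i, f a := by
  classical
  induction s using Finset.induction_on with
  | empty => simp
  | insert i s hi ih =>
    rw [Finset.biUnion_insert, Finset.sum_insert hi]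
    calc _ ≤ ∑ a ∈ t i ∪ s.biUnion t, f a + ∑ a ∈ t i ∩ s.biUnion t, f a :=
          le_add_of_nonneg_right (Finset.sum_nonneg fun a _ => hf a)
      _ = _ := Finset.sum_union_inter
      _ ≤ _ := by gcongr

lemma Commute.nonsing_inv_right {m α : Type*} [Fintype m] [DecidableEq m] [CommRing α]
    {b P : Matrix m m α} (h : Commute b P) (hP : IsUnit P) : Commute b P⁻¹ := by
  obtain ⟨u, rfl⟩ := hP
  rw [← Matrix.coe_units_inv]
  exact h.units_inv_right

section MatrixAnalysis

open scoped ComplexOrder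

variable {𝕜 m : Type*} [RCLike 𝕜] [Fintype m] [DecidableEq m]

lemma Matrix.norm_trace_le_card_of_mem_unitaryGroup {Y : Matrix m m 𝕜}
    (hY : Y ∈ unitaryGroup m 𝕜) : ‖Y.trace‖ ≤ Fintype.card m := by
  calc ‖Y.trace‖ ≤ ∑ i, ‖Y i i‖ := norm_sum_le _ _
    _ ≤ ∑ _i : m, (1 : ℝ) := Finset.sum_le_sum fun i _ => entry_norm_bound_of_unitary hY i i
    _ = Fintype.card m := by simp

lemma Matrix.PosSemidef.norm_trace_mul_le {P Y : Matrix m m 𝕜} (hP : P.PosSemidef)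
    (hY : Y ∈ unitaryGroup m 𝕜) : ‖(P * Y).trace‖ ≤ ‖P.trace‖ := by
  set E : Matrix m m 𝕜 := ↑hP.1.eigenvectorUnitary
  set d := hP.1.eigenvalues
  have hd : ∀ i, 0 ≤ d i := hP.eigenvalues_nonneg
  have hZ : star E * Y * E ∈ unitaryGroup m 𝕜 :=
    mul_mem (mul_mem (Unitary.star_mem hP.1.eigenvectorUnitary.2) hY) hP.1.eigenvectorUnitary.2
  have htr : (P * Y).trace = ∑ i, (star E * Y * E) i i * d i := by
    conv_lhs => rw [hP.1.spectral_theorem]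
    rw [Unitary.conjStarAlgAut_apply, mul_assoc, trace_mul_comm, ← mul_assoc]
    simp [trace, mul_diagonal, E, d]
  have htrP : ‖P.trace‖ = ∑ i, d i := by
    rw [hP.1.trace_eq_sum_eigenvalues, ← RCLike.ofReal_sum, RCLike.norm_ofReal,
      abs_of_nonneg (Finset.sum_nonneg fun i _ => hd i)]
  rw [htr, htrP]
  refine (norm_sum_le _ _).trans (Finset.sum_le_sum fun i _ => ?_)
  rw [norm_mul, RCLike.norm_ofReal, abs_of_nonneg (hd i)]
  exact mul_le_of_le_one_left (hd i) (entry_norm_bound_of_unitary hZ i i)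

lemma Matrix.exists_isUnit_add_smul_one (C : Matrix m m 𝕜) {η : ℝ} (hη : 0 < η) :
    ∃ δ : ℝ, 0 < δ ∧ δ < η ∧ IsUnit (C + (δ : 𝕜) • 1) := by
  have hroots : {t : ℝ | ((-C).charpoly.eval (t : 𝕜)) = 0}.Finite :=
    (Polynomial.finite_setOfPred_isRoot (-C).charpoly_monic.ne_zero).preimage
      RCLike.ofReal_injective.injOn
  obtain ⟨δ, ⟨hδ0, hδη⟩, hδ⟩ := ((Set.Ioo_infinite hη).sdiff hroots).nonempty
  refine ⟨δ, hδ0, hδη, (isUnit_iff_isUnit_det _).mpr (isUnit_iff_ne_zero.mpr fun h => hδ ?_)⟩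
  rw [Set.mem_ofPred_eq, eval_charpoly, sub_neg_eq_add, scalar_apply, add_comm,
    ← smul_one_eq_diagonal]
  exact h

section Polar

open scoped MatrixOrder

noncomputable def polarUnitary (X : Matrix m m 𝕜) : Matrix m m 𝕜 := X * (CFC.abs X)⁻¹

variable {X : Matrix m m 𝕜}

lemma isUnit_cfcAbs (hX : IsUnit X) : IsUnit (CFC.abs X) :=
  isUnit_of_mul_isUnit_left (y := CFC.abs X) <| by
    rw [CFC.abs_mul_abs]; exact ((hX.star).mul hX)

lemma polarUnitary_mul_cfcAbs (hX : IsUnit X) : polarUnitary X * CFC.abs X = X := by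
  rw [polarUnitary, mul_assoc, nonsing_inv_mul _ ((isUnit_iff_isUnit_det _).mp (isUnit_cfcAbs hX)),
    mul_one]

lemma conjTranspose_mul_polarUnitary (hX : IsUnit X) : Xᴴ * polarUnitary X = CFC.abs X := by
  have h := isUnit_cfcAbs hX
  rw [polarUnitary, ← mul_assoc, ← star_eq_conjTranspose, ← CFC.abs_mul_abs, mul_assoc,
    mul_nonsing_inv _ ((isUnit_iff_isUnit_det _).mp h), mul_one]

lemma polarUnitary_mem_unitaryGroup (hX : IsUnit X) : polarUnitary X ∈ unitaryGroup m 𝕜 := by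
  have hP := (CFC.abs_nonneg X).posSemidef
  rw [mem_unitaryGroup_iff', star_eq_conjTranspose]
  nth_rw 1 [polarUnitary]
  rw [conjTranspose_mul, conjTranspose_nonsing_inv, hP.1.eq, mul_assoc,
    conjTranspose_mul_polarUnitary hX,
    nonsing_inv_mul _ ((isUnit_iff_isUnit_det _).mp (isUnit_cfcAbs hX))]

lemma Commute.polarUnitary {b : Matrix m m 𝕜} (h₁ : Commute X b) (h₂ : Commute X (star b))
    (hX : IsUnit X) : Commute b (polarUnitary X) :=
  h₁.symm.mul_right ((h₁.cfcAbs_right h₂).nonsing_inv_right (isUnit_cfcAbs hX))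

lemma polarUnitary_mem_centralizer {s : Set (Matrix m m 𝕜)} (hX : IsUnit X)
    (hXs : X ∈ StarSubalgebra.centralizer 𝕜 s) :
    polarUnitary X ∈ StarSubalgebra.centralizer 𝕜 s := by
  rw [StarSubalgebra.mem_centralizer_iff] at hXs ⊢
  intro b hb
  obtain ⟨h₁, h₂⟩ := hXs b hb
  exact ⟨Commute.polarUnitary h₁.symm h₂.symm hX,
    Commute.polarUnitary h₂.symm (by rw [star_star]; exact h₁.symm) hX⟩

lemma norm_trace_conjTranspose_mul_le_polarUnitary (hX : IsUnit X) {Z : Matrix m m 𝕜}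
    (hZ : Z ∈ unitaryGroup m 𝕜) :
    ‖(Xᴴ * Z).trace‖ ≤ ‖(Xᴴ * polarUnitary X).trace‖ := by
  have hP := (CFC.abs_nonneg X).posSemidef
  have hW := polarUnitary_mem_unitaryGroup hX
  rw [conjTranspose_mul_polarUnitary hX]
  conv_lhs => rw [← polarUnitary_mul_cfcAbs hX, conjTranspose_mul, hP.1.eq, mul_assoc]
  exact hP.norm_trace_mul_le (mul_mem (Unitary.star_mem hW) hZ)

end Polar

lemma exists_unitary_mem_centralizer_norm_trace_ge {s : Set (Matrix m m 𝕜)}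
    (hXs : X ∈ StarSubalgebra.centralizer 𝕜 s) {ε : ℝ} (hε : 0 < ε) :
    ∃ W ∈ unitaryGroup m 𝕜, W ∈ StarSubalgebra.centralizer 𝕜 s ∧
      ∀ Z ∈ unitaryGroup m 𝕜, ‖(Xᴴ * Z).trace‖ ≤ ‖(Xᴴ * W).trace‖ + ε := by
  -- `X` may be singular; `X + δ` is not, and the shift moves each `‖Tr(X†Z)‖` by `≤ δ · card m`.
  have hcard : (0 : ℝ) < 2 * (Fintype.card m + 1) := by positivity
  obtain ⟨δ, hδ0, hδε, hunit⟩ := X.exists_isUnit_add_smul_one (div_pos hε hcard)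
  set X' := X + (δ : 𝕜) • 1
  have hX's : X' ∈ StarSubalgebra.centralizer 𝕜 s :=
    add_mem hXs (Subalgebra.smul_mem _ (one_mem _) _)
  have htrace : ∀ Y : Matrix m m 𝕜, (X'ᴴ * Y).trace = (Xᴴ * Y).trace + δ * Y.trace := by
    intro Y
    simp [X', conjTranspose_add, add_mul, trace_add, RCLike.real_smul_eq_coe_mul]
  have hpert : ∀ Y ∈ unitaryGroup m 𝕜,
      |‖(X'ᴴ * Y).trace‖ - ‖(Xᴴ * Y).trace‖| ≤ δ * Fintype.card m := by
    intro Y hY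
    refine (abs_norm_sub_norm_le _ _).trans ?_
    rw [htrace, add_sub_cancel_left, norm_mul, RCLike.norm_ofReal, abs_of_pos hδ0]
    exact mul_le_mul_of_nonneg_left (norm_trace_le_card_of_mem_unitaryGroup hY) hδ0.le
  have hW := polarUnitary_mem_unitaryGroup hunit
  refine ⟨polarUnitary X', hW, polarUnitary_mem_centralizer hunit hX's, fun Z hZ => ?_⟩
  have h1 := abs_le.mp (hpert Z hZ)
  have h2 := abs_le.mp (hpert _ hW)
  have h3 := norm_trace_conjTranspose_mul_le_polarUnitary hunit hZ
  have h4 : 2 * δ * Fintype.card m ≤ ε := by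
    rw [lt_div_iff₀ hcard] at hδε
    nlinarith
  linarith

end MatrixAnalysis

section KronPi

variable {ι m R : Type*} [Fintype ι] [CommRing R]

def kronPi (M : ι → Matrix m m R) : Matrix (ι → m) (ι → m) R :=
  of fun a b => ∏ i, M i (a i) (b i)

lemma kronPi_mul [DecidableEq ι] [Fintype m] (M N : ι → Matrix m m R) :
    kronPi M * kronPi N = kronPi (M * N) := by
  ext a b
  simp only [kronPi, mul_apply, of_apply, Pi.mul_apply, Finset.prod_univ_sum,
    Fintype.piFinset_univ, Finset.prod_mul_distrib]

lemma kronPi_one [DecidableEq ι] [DecidableEq m] : kronPi (1 : ι → Matrix m m R) = 1 := by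
  ext a b
  by_cases h : a = b
  · subst h; simp [kronPi]
  · obtain ⟨i, hi⟩ := Function.ne_iff.mp h
    simpa [kronPi, one_apply, h] using Finset.prod_eq_zero (Finset.mem_univ i) (by simp [hi])

lemma kronPi_smul (c : ι → R) (M : ι → Matrix m m R) :
    kronPi (fun i => c i • M i) = (∏ i, c i) • kronPi M := by
  ext a b
  simp [kronPi, Finset.prod_mul_distrib]

lemma conjTranspose_kronPi [StarRing R] (M : ι → Matrix m m R) :
    (kronPi M)ᴴ = kronPi fun i => (M i)ᴴ := by
  ext a b
  simp [kronPi]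

lemma trace_kronPi [DecidableEq ι] [Fintype m] (M : ι → Matrix m m R) :
    (kronPi M).trace = ∏ i, (M i).trace := by
  simp only [trace, Matrix.diag, kronPi, of_apply, Finset.prod_univ_sum, Fintype.piFinset_univ]

end KronPi

lemma pauli_zero : pauli 0 = 1 := by simp [pauli]

lemma pauli_conjTranspose (p : Fin 4) : (pauli p)ᴴ = pauli p := by
  fin_cases p <;>
    simp [pauli, Matrix.one_fin_two, conjTranspose, Matrix.map, Matrix.transpose] <;>
    · ext i j; fin_cases i <;> fin_cases j <;> simp

lemma pauli_mul_self (p : Fin 4) : pauli p * pauli p = 1 := by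
  fin_cases p <;> simp [pauli, Matrix.one_fin_two]

lemma trace_pauli_mul (p q : Fin 4) : (pauli p * pauli q).trace = if p = q then 2 else 0 := by
  fin_cases p <;> fin_cases q <;>
    simp [pauli, Matrix.one_fin_two, Matrix.trace_fin_two] <;>
    norm_num [Complex.ext_iff]

lemma exists_pauli_mul_eq_neg {q : Fin 4} (hq : q ≠ 0) :
    ∃ p, pauli p * pauli q = -(pauli q * pauli p) := by
  fin_cases q
  · exact absurd rfl hq
  · exact ⟨3, by ext i j; fin_cases i <;> fin_cases j <;> simp [pauli]⟩
  · exact ⟨3, by ext i j; fin_cases i <;> fin_cases j <;> simp [pauli]⟩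
  · exact ⟨1, by ext i j; fin_cases i <;> fin_cases j <;> simp [pauli]⟩

section PauliString

variable {n : ℕ}

lemma pauliString_eq_kronPi (x : Fin n → Fin 4) : pauliString x = kronPi fun i => pauli (x i) :=
  rfl

lemma pauliString_conjTranspose (x : Fin n → Fin 4) : (pauliString x)ᴴ = pauliString x := by
  simp [pauliString_eq_kronPi, conjTranspose_kronPi, pauli_conjTranspose]

lemma pauliString_mul_self (x : Fin n → Fin 4) : pauliString x * pauliString x = 1 := by
  rw [pauliString_eq_kronPi, kronPi_mul, ← kronPi_one]
  congr 1
  ext1 i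
  exact pauli_mul_self (x i)

lemma pauliString_mem_unitaryGroup (x : Fin n → Fin 4) :
    pauliString x ∈ unitaryGroup (Fin n → Fin 2) ℂ := by
  rw [mem_unitaryGroup_iff, star_eq_conjTranspose, pauliString_conjTranspose,
    pauliString_mul_self]

lemma trace_pauliString_mul_pauliString (x y : Fin n → Fin 4) :
    (pauliString x * pauliString y).trace = if x = y then 2 ^ n else 0 := by
  rw [pauliString_eq_kronPi, pauliString_eq_kronPi, kronPi_mul, trace_kronPi]
  simp only [Pi.mul_apply, trace_pauli_mul]
  split_ifs with h
  · simp [h]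
  · obtain ⟨i, hi⟩ := Function.ne_iff.mp h
    exact Finset.prod_eq_zero (Finset.mem_univ i) (if_neg hi)

lemma commute_pauliString_of_disjoint {x z : Fin n → Fin 4}
    (h : Disjoint (psupp z) (psupp x)) : Commute (pauliString z) (pauliString x) := by
  rw [Commute, SemiconjBy, pauliString_eq_kronPi, pauliString_eq_kronPi, kronPi_mul, kronPi_mul]
  congr 1
  ext1 i
  by_cases hz : z i = 0
  · simp [hz, pauli_zero]
  · have hx : x i = 0 := by
      by_contra hx
      exact Finset.disjoint_left.mp h (show i ∈ psupp z by simp [psupp, hz])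
        (show i ∈ psupp x by simp [psupp, hx])
    simp [hx, pauli_zero]

lemma exists_pauliString_mul_eq_neg {x : Fin n → Fin 4} {i : Fin n} (hi : i ∈ psupp x) :
    ∃ z, psupp z ⊆ {i} ∧ pauliString z * pauliString x = -(pauliString x * pauliString z) := by
  obtain ⟨p, hp⟩ := exists_pauli_mul_eq_neg (by simpa [psupp] using hi)
  refine ⟨fun j => if j = i then p else 0, fun j hj => ?_, ?_⟩
  · by_contra hji
    simp only [psupp, Finset.mem_filter, Finset.mem_univ, true_and] at hj
    exact hj (if_neg fun h => hji (Finset.mem_singleton.mpr h))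
  · have hfactor : ((fun j => pauli (if j = i then p else 0)) * fun j => pauli (x j))
        = fun j => (if j = i then (-1 : ℂ) else 1) •
          (pauli (x j) * pauli (if j = i then p else 0)) := by
      ext1 j
      by_cases hj : j = i
      · subst hj; simp [hp]
      · simp [hj, pauli_zero]
    rw [pauliString_eq_kronPi, pauliString_eq_kronPi, kronPi_mul, kronPi_mul, hfactor, kronPi_smul]
    simp [Pi.mul_def]

lemma trace_pauliString_mul (A : Matrix (Fin n → Fin 2) (Fin n → Fin 2) ℂ)
    (x : Fin n → Fin 4) : (pauliString x * A).trace = 2 ^ n * pauliCoeff A x := by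
  rw [pauliCoeff, pauliString_conjTranspose, ← mul_assoc]
  field_simp

lemma pauliCoeff_sum_smul_pauliString (c : (Fin n → Fin 4) → ℂ) (y : Fin n → Fin 4) :
    pauliCoeff (∑ x, c x • pauliString x) y = c y := by
  simp [pauliCoeff, pauliString_conjTranspose, Finset.mul_sum, trace_sum,
    trace_pauliString_mul_pauliString]
  field_simp

lemma sum_pauliCoeff_smul_pauliString (A : Matrix (Fin n → Fin 2) (Fin n → Fin 2) ℂ) :
    ∑ x, pauliCoeff A x • pauliString x = A := by
  set Φ := Fintype.linearCombination ℂ (pauliString (n := n))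
  have hinj : Function.Injective Φ := fun c d h => funext fun y => by
    simpa [Φ, Fintype.linearCombination_apply, pauliCoeff_sum_smul_pauliString] using
      congrArg (pauliCoeff · y) h
  have hdim : Module.finrank ℂ ((Fin n → Fin 4) → ℂ)
      = Module.finrank ℂ (Matrix (Fin n → Fin 2) (Fin n → Fin 2) ℂ) := by
    simp [Module.finrank_fintype_fun_eq_card, Module.finrank_matrix, ← mul_pow]
  obtain ⟨c, rfl⟩ := (LinearMap.injective_iff_surjective_of_finrank_eq_finrank hdim).mp hinj A
  simp [Φ, Fintype.linearCombination_apply, pauliCoeff_sum_smul_pauliString]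

lemma trace_conjTranspose_mul_eq_sum (A B : Matrix (Fin n → Fin 2) (Fin n → Fin 2) ℂ) :
    (Aᴴ * B).trace = 2 ^ n * ∑ x, star (pauliCoeff A x) * pauliCoeff B x := by
  conv_lhs => rw [← sum_pauliCoeff_smul_pauliString A]
  simp [conjTranspose_sum, pauliString_conjTranspose, Finset.sum_mul, trace_sum,
    trace_pauliString_mul, Finset.mul_sum, mul_left_comm]

lemma sum_norm_sq_pauliCoeff_of_mem_unitaryGroup {V : Matrix (Fin n → Fin 2) (Fin n → Fin 2) ℂ}
    (hV : V ∈ unitaryGroup (Fin n → Fin 2) ℂ) : ∑ x, ‖pauliCoeff V x‖ ^ 2 = 1 := by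
  have h := trace_conjTranspose_mul_eq_sum V V
  rw [← star_eq_conjTranspose, mem_unitaryGroup_iff'.mp hV, trace_one] at h
  simp only [Fintype.card_fun, Fintype.card_fin, Nat.cast_pow, Nat.cast_ofNat,
    RCLike.star_def, RCLike.conj_mul] at h
  apply Complex.ofReal_injective
  push_cast
  exact mul_left_cancel₀ (pow_ne_zero n two_ne_zero) (h.symm.trans (mul_one _).symm)

def juntaAlgebra (A : Finset (Fin n)) :
    StarSubalgebra ℂ (Matrix (Fin n → Fin 2) (Fin n → Fin 2) ℂ) :=
  StarSubalgebra.centralizer ℂ (pauliString '' {z | Disjoint (psupp z) A})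

lemma trace_pauliString_mul_eq_zero_of_commute {M : Matrix (Fin n → Fin 2) (Fin n → Fin 2) ℂ}
    {x z : Fin n → Fin 4} (hcomm : pauliString z * M = M * pauliString z)
    (hanti : pauliString z * pauliString x = -(pauliString x * pauliString z)) :
    (pauliString x * M).trace = 0 := by
  have key : (pauliString x * M).trace = -(pauliString x * M).trace :=
    calc (pauliString x * M).trace
        = (pauliString x * M * pauliString z * pauliString z).trace := by
          rw [mul_assoc _ (pauliString z), pauliString_mul_self, mul_one]
      _ = (pauliString z * pauliString x * pauliString z * M).trace := by
          rw [trace_mul_comm]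
          simp only [mul_assoc, hcomm]
      _ = -(pauliString x * M).trace := by
          rw [hanti, neg_mul, neg_mul, trace_neg, mul_assoc (pauliString x),
            pauliString_mul_self, mul_one]
  exact self_eq_neg.mp key

lemma isJuntaOn_iff_mem_juntaAlgebra {M : Matrix (Fin n → Fin 2) (Fin n → Fin 2) ℂ}
    {A : Finset (Fin n)} : IsJuntaOn M A ↔ M ∈ juntaAlgebra A := by
  simp only [juntaAlgebra, StarSubalgebra.mem_centralizer_iff, Set.mem_image, Set.mem_ofPred_eq,
    forall_exists_index, and_imp, forall_apply_eq_imp_iff₂, star_eq_conjTranspose,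
    pauliString_conjTranspose, and_self]
  constructor
  · intro hM z hz
    rw [← sum_pauliCoeff_smul_pauliString M]
    refine Commute.sum_right _ _ _ fun x _ => ?_
    by_cases hx : psupp x ⊆ A
    · exact (commute_pauliString_of_disjoint (hz.mono_right hx)).smul_right _
    · rw [hM x hx, zero_smul]
      exact Commute.zero_right _
  · intro hM x hx
    obtain ⟨i, hix, hiA⟩ := Finset.not_subset.mp hx
    obtain ⟨z, hzi, hanti⟩ := exists_pauliString_mul_eq_neg hix
    have hz : Disjoint (psupp z) A :=
      Finset.disjoint_of_subset_left hzi (Finset.disjoint_singleton_left.mpr hiA)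
    have htr := trace_pauliString_mul_eq_zero_of_commute (hM z hz) hanti
    rw [trace_pauliString_mul] at htr
    exact (mul_eq_zero.mp htr).resolve_left (pow_ne_zero n two_ne_zero)

end PauliString

section Restriction

variable {n : ℕ}

noncomputable def pauliRestrict (A : Matrix (Fin n → Fin 2) (Fin n → Fin 2) ℂ)
    (T : Finset (Fin n)) : Matrix (Fin n → Fin 2) (Fin n → Fin 2) ℂ :=
  ∑ x, (if psupp x ⊆ T then pauliCoeff A x else 0) • pauliString x

variable {A V : Matrix (Fin n → Fin 2) (Fin n → Fin 2) ℂ} {T T' : Finset (Fin n)}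

lemma pauliCoeff_pauliRestrict (x : Fin n → Fin 4) :
    pauliCoeff (pauliRestrict A T) x = if psupp x ⊆ T then pauliCoeff A x else 0 :=
  pauliCoeff_sum_smul_pauliString _ x

lemma isJuntaOn_pauliRestrict : IsJuntaOn (pauliRestrict A T) T := fun x hx => by
  rw [pauliCoeff_pauliRestrict, if_neg hx]

lemma trace_conjTranspose_pauliRestrict_mul (hV : IsJuntaOn V T) :
    ((pauliRestrict A T)ᴴ * V).trace = (Aᴴ * V).trace := by
  rw [trace_conjTranspose_mul_eq_sum, trace_conjTranspose_mul_eq_sum]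
  congr 1
  refine Finset.sum_congr rfl fun x _ => ?_
  by_cases hx : psupp x ⊆ T
  · rw [pauliCoeff_pauliRestrict, if_pos hx]
  · rw [hV x hx, mul_zero, mul_zero]

lemma norm_trace_sub_pauliRestrict_le (hVu : V ∈ unitaryGroup (Fin n → Fin 2) ℂ)
    (hV : IsJuntaOn V T) :
    ‖(Aᴴ * V).trace - ((pauliRestrict A T')ᴴ * V).trace‖
      ≤ 2 ^ n * √(∑ x with psupp x ⊆ T ∧ ¬ psupp x ⊆ T', ‖pauliCoeff A x‖ ^ 2) := by
  have hdiff : (Aᴴ * V).trace - ((pauliRestrict A T')ᴴ * V).trace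
      = 2 ^ n * ∑ x with psupp x ⊆ T ∧ ¬ psupp x ⊆ T',
          star (pauliCoeff A x) * pauliCoeff V x := by
    rw [trace_conjTranspose_mul_eq_sum, trace_conjTranspose_mul_eq_sum, ← mul_sub,
      ← Finset.sum_sub_distrib, Finset.sum_filter]
    congr 1
    refine Finset.sum_congr rfl fun x _ => ?_
    rw [pauliCoeff_pauliRestrict]
    by_cases h' : psupp x ⊆ T'
    · simp [h']
    by_cases h : psupp x ⊆ T
    · simp [h, h']
    · simp [h, h', hV x h]
  have hVsum : ∑ x with psupp x ⊆ T ∧ ¬ psupp x ⊆ T', ‖pauliCoeff V x‖ ^ 2 ≤ 1 :=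
    (sum_norm_sq_pauliCoeff_of_mem_unitaryGroup hVu) ▸
      Finset.sum_le_sum_of_subset_of_nonneg (Finset.filter_subset _ _) fun _ _ _ => sq_nonneg _
  rw [hdiff, norm_mul, norm_pow, RCLike.norm_ofNat]
  gcongr
  refine (norm_sum_star_mul_le _ _ _).trans ?_
  calc _ ≤ √(∑ x with psupp x ⊆ T ∧ ¬ psupp x ⊆ T', ‖pauliCoeff A x‖ ^ 2) * √1 := by gcongr
    _ = _ := by rw [Real.sqrt_one, mul_one]

end Restriction

section Influence

variable {n k : ℕ} {U : Matrix (Fin n → Fin 2) (Fin n → Fin 2) ℂ} {S T : Finset (Fin n)}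

lemma sum_norm_sq_pauliCoeff_le_sum_infLe (hT : T.card ≤ k) :
    ∑ x with psupp x ⊆ T ∧ ¬ psupp x ⊆ T ∩ S, ‖pauliCoeff U x‖ ^ 2
      ≤ ∑ i ∈ T \ S, infLe U k i := by
  refine (Finset.sum_le_sum_of_subset_of_nonneg ?_ fun _ _ _ => sq_nonneg _).trans
    (Finset.sum_biUnion_le_sum_sum (fun _ => sq_nonneg _) _ _)
  intro x hx
  simp only [Finset.mem_filter, Finset.mem_univ, true_and] at hx
  obtain ⟨i, hix, hiTS⟩ := Finset.not_subset.mp hx.2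
  refine Finset.mem_biUnion.mpr ⟨i, Finset.mem_sdiff.mpr ⟨hx.1 hix, fun hiS => hiTS
    (Finset.mem_inter.mpr ⟨hx.1 hix, hiS⟩)⟩, ?_⟩
  simp only [Finset.mem_filter, Finset.mem_univ, true_and]
  exact ⟨(Finset.card_le_card hx.1).trans hT, by simpa [psupp] using hix⟩

lemma sum_norm_sq_pauliCoeff_le_sq_of_infLe {τ : ℝ}
    (hS : ∀ i : Fin n, τ ^ 2 / k ≤ infLe U k i → i ∈ S) (hT : T.card ≤ k) :
    ∑ x with psupp x ⊆ T ∧ ¬ psupp x ⊆ T ∩ S, ‖pauliCoeff U x‖ ^ 2 ≤ τ ^ 2 := by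
  refine (sum_norm_sq_pauliCoeff_le_sum_infLe hT).trans ?_
  calc ∑ i ∈ T \ S, infLe U k i ≤ ∑ _i ∈ T \ S, τ ^ 2 / k :=
        Finset.sum_le_sum fun i hi => (not_le.mp (mt (hS i) (Finset.mem_sdiff.mp hi).2)).le
    _ = (T \ S).card * (τ ^ 2 / k) := by rw [Finset.sum_const, nsmul_eq_mul]
    _ ≤ τ ^ 2 := by
      rcases Nat.eq_zero_or_pos k with rfl | hk
      · simp only [Nat.cast_zero, div_zero, mul_zero]
        positivity
      · calc (T \ S).card * (τ ^ 2 / k) ≤ k * (τ ^ 2 / k) := by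
              gcongr
              exact_mod_cast (Finset.card_le_card Finset.sdiff_subset).trans hT
          _ = τ ^ 2 := mul_div_cancel₀ _ (by positivity)

end Influence

lemma exists_unitary_juntaOn_inter_norm_trace_ge {n k : ℕ} {τ ε : ℝ} {S T : Finset (Fin n)}
    {U V : Matrix (Fin n → Fin 2) (Fin n → Fin 2) ℂ} (hτ : 0 ≤ τ)
    (hS : ∀ i : Fin n, τ ^ 2 / k ≤ infLe U k i → i ∈ S)
    (hV : V ∈ unitaryGroup (Fin n → Fin 2) ℂ) (hVT : IsJuntaOn V T) (hT : T.card ≤ k)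
    (hε : 0 < ε) :
    ∃ W ∈ unitaryGroup (Fin n → Fin 2) ℂ, IsJuntaOn W (T ∩ S) ∧
      ‖(Uᴴ * V).trace‖ ≤ ‖(Uᴴ * W).trace‖ + 2 ^ n * τ + ε := by
  obtain ⟨W, hW, hWC, hmax⟩ := exists_unitary_mem_centralizer_norm_trace_ge
    (isJuntaOn_iff_mem_juntaAlgebra.mp (isJuntaOn_pauliRestrict (A := U))) hε
  have hWT : IsJuntaOn W (T ∩ S) := isJuntaOn_iff_mem_juntaAlgebra.mpr hWC
  have htail : ‖(Uᴴ * V).trace - ((pauliRestrict U (T ∩ S))ᴴ * V).trace‖ ≤ 2 ^ n * τ := by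
    refine (norm_trace_sub_pauliRestrict_le hV hVT).trans ?_
    gcongr
    exact Real.sqrt_le_iff.mpr ⟨hτ, sum_norm_sq_pauliCoeff_le_sq_of_infLe hS hT⟩
  have hmaxV := hmax V hV
  rw [trace_conjTranspose_pauliRestrict_mul hWT] at hmaxV
  refine ⟨W, hW, hWT, ?_⟩
  linarith [norm_le_norm_add_norm_sub' (Uᴴ * V).trace ((pauliRestrict U (T ∩ S))ᴴ * V).trace]

theorem stmt18_general {n : ℕ} (k : ℕ) (τ : ℝ) (hτ : 0 < τ)
    (S : Finset (Fin n))
    (U : Matrix (Fin n → Fin 2) (Fin n → Fin 2) ℂ)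
    (hS : ∀ i : Fin n, τ ^ 2 / k ≤ infLe U k i → i ∈ S) :
    distToKJuntaIn U S k ≤ distToKJuntaIn U Finset.univ k + Real.sqrt τ := by
  unfold distToKJuntaIn
  refine Real.sInf_le_sInf_add ?_ ?_ ?_
  · refine ⟨0, ?_⟩
    rintro _ ⟨V, -, T, -, -, -, rfl⟩
    exact Real.sqrt_nonneg _
  · exact ⟨_, 1, one_mem _, ∅, Finset.empty_subset _, by simp,
      isJuntaOn_iff_mem_juntaAlgebra.mpr (one_mem _), rfl⟩
  rintro _ ⟨V, hV, T, -, hT, hVT, rfl⟩ η hη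
  obtain ⟨W, hW, hWT, hle⟩ := exists_unitary_juntaOn_inter_norm_trace_ge hτ.le hS hV hVT hT
    (ε := 2 ^ n * η ^ 2) (by positivity)
  refine ⟨_, ⟨W, hW, T ∩ S, Finset.inter_subset_right,
    (Finset.card_le_card Finset.inter_subset_left).trans hT, hWT, rfl⟩, ?_⟩
  exact sqrt_one_sub_div_le (by positivity) hτ.le hη.le (by linarith)

theorem stmt18 {n : ℕ} (k : ℕ) (hk : k < n) (τ : ℝ) (hτ : 0 < τ)
    (S : Finset (Fin n))
    (U : Matrix (Fin n → Fin 2) (Fin n → Fin 2) ℂ)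
    (hU : U ∈ Matrix.unitaryGroup (Fin n → Fin 2) ℂ)
    (hS : ∀ i : Fin n, τ ^ 2 / k ≤ infLe U k i → i ∈ S) :
    distToKJuntaIn U S k ≤ distToKJuntaIn U Finset.univ k + Real.sqrt τ :=
  stmt18_general k τ hτ S U hS
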